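/- arXiv:2003.14130 — 2 statements merged into one kernel-verified Lean document; each statement's English description precedes it below -/
import Mathlib

section
/- For any positive root β of a finite root system, the length of the reflection s_β satisfies ℓ(s_β) ≤ 2⟨ρ, β∨⟩ - 1, where ρ is the half-sum of positive roots. -/
/-- An axiomatized finite crystallographic root system datum, with weight/root
space `V` over `ℚ`, simple roots `α i`, an invariant inner product `B`,
Weyl group `W` acting faithfully on `V`, and the set of roots `isRoot`. -/
structure RootSystemData (I : Type) [Fintype I] [DecidableEq I] where
  V : Type
  [instAddCommGroup : AddCommGroup V]
  [instModule : Module ℚ V]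
  W : Type
  [instGroup : Group W]
  α : I → V
  B : V →ₗ[ℚ] V →ₗ[ℚ] ℚ
  toLin : W →* Module.End ℚ V
  s : I → W
  isRoot : V → Prop
  B_symm : ∀ x y, B x y = B y x
  B_pos : ∀ β, isRoot β → 0 < B β β
  B_inv : ∀ (w : W) (x y : V), B (toLin w x) (toLin w y) = B x y
  root_simple : ∀ i, isRoot (α i)
  root_inv : ∀ (w : W) (β : V), isRoot β → isRoot (toLin w β)
  root_gen : ∀ β, isRoot β → ∃ (w : W) (i : I), β = toLin w (α i)
  root_finite : (setOf isRoot).Finite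
  indep : LinearIndependent ℚ α
  s_act : ∀ i x, toLin (s i) x = x - (2 * B (α i) x / B (α i) (α i)) • α i
  gen : Subgroup.closure (Set.range s) = ⊤
  faithful : Function.Injective toLin
  root_int : ∀ β, isRoot β → ∃ c : I → ℤ, β = ∑ i, (c i : ℚ) • α i
  pos_or_neg : ∀ β, isRoot β →
    (∃ c : I → ℕ, β = ∑ i, (c i : ℚ) • α i) ∨ (∃ c : I → ℕ, -β = ∑ i, (c i : ℚ) • α i)

attribute [instance] RootSystemData.instAddCommGroup RootSystemData.instModule
  RootSystemData.instGroup

namespace RootSystemData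

variable {I : Type} [Fintype I] [DecidableEq I] (R : RootSystemData I)

/-- `β` is a positive root. -/
def IsPos (β : R.V) : Prop :=
  R.isRoot β ∧ ∃ c : I → ℕ, β = ∑ i, (c i : ℚ) • R.α i

/-- The finite set of positive roots. -/
noncomputable def posFinset : Finset R.V :=
  (Set.Finite.subset R.root_finite (fun _ hb => hb.1) : (setOf R.IsPos).Finite).toFinset

/-- Half the sum of the positive roots. -/
noncomputable def ρ : R.V := (2 : ℚ)⁻¹ • ∑ β ∈ R.posFinset, β

/-- The pairing `⟨x, β∨⟩` of `x` with the coroot of `β`. -/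
noncomputable def coroot (β x : R.V) : ℚ := 2 * R.B β x / R.B β β

open Classical in
/-- The reflection `s_β ∈ W` in a root `β`. -/
noncomputable def refl (β : R.V) : R.W :=
  if h : R.isRoot β then
    (R.root_gen β h).choose * R.s (R.root_gen β h).choose_spec.choose *
      (R.root_gen β h).choose⁻¹
  else 1

/-- The length function on the Weyl group. -/
noncomputable def len (w : R.W) : ℕ :=
  sInf {n | ∃ l : List I, l.length = n ∧ (l.map R.s).prod = w}

/-- Bruhat order: generated by multiplication by reflections which increases length. -/
def bruhatLE : R.W → R.W → Prop :=
  Relation.ReflTransGen (fun u v => (∃ β, R.IsPos β ∧ v = R.refl β * u) ∧ R.len u < R.len v)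

def bruhatLT (u v : R.W) : Prop := R.bruhatLE u v ∧ u ≠ v

/-- The parabolic subgroup `W_J`. -/
def WJ (J : Set I) : Subgroup R.W := Subgroup.closure (R.s '' J)

/-- `w` is a minimal-length representative of its coset `w W_J`. -/
def IsMinRep (J : Set I) (w : R.W) : Prop :=
  ∀ z ∈ R.WJ J, R.len w ≤ R.len (w * z)

/-- `β ∈ Δ⁺_J`: positive roots in the span of the simple roots indexed by `J`. -/
def posJ (J : Set I) (β : R.V) : Prop :=
  R.IsPos β ∧ β ∈ Submodule.span ℚ (R.α '' J)

/-- A Bruhat edge `x → x s_β` in the quantum Bruhat graph. -/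
def BruhatEdge (x : R.W) (β : R.V) : Prop :=
  R.IsPos β ∧ R.len (x * R.refl β) = R.len x + 1

/-- A quantum edge `x → x s_β` in the quantum Bruhat graph. -/
def QuantumEdge (x : R.W) (β : R.V) : Prop :=
  R.IsPos β ∧ (R.len (x * R.refl β) : ℚ) = R.len x + 1 - 2 * R.coroot β R.ρ

/-- An edge of the quantum Bruhat graph. -/
def QBGEdge (x : R.W) (β : R.V) : Prop := R.BruhatEdge x β ∨ R.QuantumEdge x β

/-- A quantum root: `ℓ(s_β) = 2⟨ρ, β∨⟩ - 1`. -/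
def IsQuantumRoot (β : R.V) : Prop :=
  R.IsPos β ∧ (R.len (R.refl β) : ℚ) = 2 * R.coroot β R.ρ - 1

/-- A long root (maximal squared length); in simply-laced type all roots are long. -/
def IsLong (β : R.V) : Prop :=
  R.isRoot β ∧ ∀ γ, R.isRoot γ → R.B γ γ ≤ R.B β β

/-- A short root. -/
def IsShort (β : R.V) : Prop := R.isRoot β ∧ ¬ R.IsLong β

def IsSimplyLaced : Prop :=
  ∀ β γ, R.isRoot β → R.isRoot γ → R.B β β = R.B γ γ

def IsIrreducible : Prop :=
  Nonempty I ∧ ∀ J : Set I,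
    (∀ i ∈ J, ∀ j ∉ J, R.B (R.α i) (R.α j) = 0) → J = ∅ ∨ J = Set.univ

/-- `θ` is the highest root. -/
def IsHighestRoot (θ : R.V) : Prop :=
  R.IsPos θ ∧ ∀ β, R.IsPos β → ∃ c : I → ℕ, θ - β = ∑ i, (c i : ℚ) • R.α i

/-- `ϖ` is the fundamental weight associated to `k`. -/
def IsFundamental (k : I) (ϖ : R.V) : Prop :=
  ∀ i, R.coroot (R.α i) ϖ = if i = k then 1 else 0

/-- `ϖ` is minuscule. -/
def IsMinuscule (ϖ : R.V) : Prop :=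
  ∀ β, R.isRoot β → R.coroot β ϖ ∈ ({-1, 0, 1} : Set ℚ)

/-- A strict total order on `Δ⁺` which is a reflection (convex) order. -/
def IsReflectionOrder (lt : R.V → R.V → Prop) : Prop :=
  (∀ β, ¬ lt β β) ∧ (∀ a b c, lt a b → lt b c → lt a c) ∧
  (∀ β γ, R.IsPos β → R.IsPos γ → β ≠ γ → lt β γ ∨ lt γ β) ∧
  (∀ β γ, R.IsPos β → R.IsPos γ → R.IsPos (β + γ) →
    (lt β (β + γ) ∧ lt (β + γ) γ) ∨ (lt γ (β + γ) ∧ lt (β + γ) β))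

end RootSystemData

open RootSystemData in
/-- A directed path in the quantum Bruhat graph with the given list of labels. -/
def QBGPath {I : Type} [Fintype I] [DecidableEq I] (R : RootSystemData I) :
    R.W → List R.V → R.W → Prop
  | x, [], y => x = y
  | x, β :: l, y => R.QBGEdge x β ∧ QBGPath R (x * R.refl β) l y

open RootSystemData in
/-- A directed path in the Bruhat graph (Bruhat edges only). -/
def BGPath {I : Type} [Fintype I] [DecidableEq I] (R : RootSystemData I) :
    R.W → List R.V → R.W → Prop
  | x, [], y => x = y
  | x, β :: l, y => R.BruhatEdge x β ∧ BGPath R (x * R.refl β) l y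

/-- The Cartan pairing `⟨α_j, α_i∨⟩` of type `B_n` (Bourbaki labelling, shifted
to be 0-based: the short simple root is the last one, index `n-1`). -/
def BCartan (n : ℕ) (i j : Fin n) : ℚ :=
  if i = j then 2
  else if (i : ℕ) = n - 1 ∧ (j : ℕ) + 1 = n - 1 then -2
  else if ((i : ℕ) + 1 = j ∨ (j : ℕ) + 1 = i) then -1
  else 0

/-- `R` is of type `B_n` (via the identification `e` of its index set with `Fin n`). -/
def IsTypeB {I : Type} [Fintype I] [DecidableEq I] (R : RootSystemData I)
    (n : ℕ) (e : I ≃ Fin n) : Prop :=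
  2 ≤ n ∧ ∀ i j, R.coroot (R.α i) (R.α j) = BCartan n (e i) (e j)

/-- The product `s_{a+1} s_{a+2} ⋯ s_{b+1}` (0-based: indices `a, a+1, …, b`). -/
noncomputable def sSeq {n : ℕ} (hn : 0 < n) (R : RootSystemData (Fin n)) (a b : ℕ) : R.W :=
  ((List.range (b + 1 - a)).map (fun t => R.s ⟨(a + t) % n, Nat.mod_lt _ hn⟩)).prod

/-- The sum `α_{a+1} + ⋯ + α_b` of simple roots (0-based half-open interval `[a, b)`). -/
def aSum {n : ℕ} (hn : 0 < n) (R : RootSystemData (Fin n)) (a b : ℕ) : R.V :=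
  ∑ t ∈ Finset.Ico a b, R.α ⟨t % n, Nat.mod_lt _ hn⟩

/-! Induction on the height of `β`. Some simple root `α_i` has `⟨β, α_i∨⟩ > 0`, since
`(β, β) > 0` and `β` is a nonnegative combination of simple roots. If `β = α_i`, then
`s_β = s_i` and `⟨ρ, α_i∨⟩ = 1`. Otherwise `β' = s_i β` is a positive root of smaller height,
`s_β = s_i s_β' s_i` is at most two longer than `s_β'`, and, as `s_i ρ = ρ - α_i`,
`⟨ρ, β∨⟩ = ⟨ρ, β'∨⟩ - ⟨α_i, β'∨⟩ ≥ ⟨ρ, β'∨⟩ + 1` because `⟨α_i, β'∨⟩` is a negative integer. -/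

namespace RootSystemData

variable {I : Type} [Fintype I] [DecidableEq I] (R : RootSystemData I)

lemma coeff_eq_of_sum_eq {c d : I → ℚ} (h : ∑ k, c k • R.α k = ∑ k, d k • R.α k) (i : I) :
    c i = d i :=
  Fintype.linearIndependent_iffₛ.mp R.indep c d h i

lemma sum_single_smul (i : I) (t : ℚ) : ∑ k, (Pi.single i t : I → ℚ) k • R.α k = t • R.α i := by
  simp [Pi.single_apply, ite_smul]

lemma ne_zero_of_isRoot {β : R.V} (h : R.isRoot β) : β ≠ 0 := by
  rintro rfl
  simpa using R.B_pos 0 h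

lemma toLin_apply_inv_apply (w : R.W) (x : R.V) : R.toLin w (R.toLin w⁻¹ x) = x := by
  rw [← Module.End.mul_apply, ← map_mul, mul_inv_cancel, map_one, Module.End.one_apply]

lemma toLin_inv_apply_apply (w : R.W) (x : R.V) : R.toLin w⁻¹ (R.toLin w x) = x := by
  simpa only [inv_inv] using R.toLin_apply_inv_apply w⁻¹ x

lemma coroot_toLin (w : R.W) (β x : R.V) :
    R.coroot (R.toLin w β) (R.toLin w x) = R.coroot β x := by
  simp only [coroot, R.B_inv]

lemma coroot_smul (β : R.V) (c : ℚ) (x : R.V) : R.coroot β (c • x) = c * R.coroot β x := by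
  simp only [coroot, map_smul, smul_eq_mul]
  ring

lemma coroot_sub (β x y : R.V) : R.coroot β (x - y) = R.coroot β x - R.coroot β y := by
  simp only [coroot, map_sub]
  ring

lemma coroot_neg (β x : R.V) : R.coroot β (-x) = -R.coroot β x := by
  simp only [coroot, map_neg]
  ring

lemma coroot_self {β : R.V} (h : R.isRoot β) : R.coroot β β = 2 := by
  rw [coroot, mul_div_assoc, div_self (R.B_pos β h).ne', mul_one]

lemma coroot_pos_iff {β : R.V} (h : R.isRoot β) (x : R.V) : 0 < R.coroot β x ↔ 0 < R.B β x := by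
  rw [coroot, div_pos_iff_of_pos_right (R.B_pos β h), mul_pos_iff_of_pos_left two_pos]

lemma s_apply (i : I) (x : R.V) : R.toLin (R.s i) x = x - R.coroot (R.α i) x • R.α i :=
  R.s_act i x

lemma s_apply_simple (i : I) : R.toLin (R.s i) (R.α i) = -R.α i := by
  rw [R.s_apply, R.coroot_self (R.root_simple i)]
  module

lemma s_apply_s_apply (i : I) (x : R.V) : R.toLin (R.s i) (R.toLin (R.s i) x) = x := by
  rw [R.s_apply i x, R.s_apply, R.coroot_sub, R.coroot_smul, R.coroot_self (R.root_simple i)]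
  module

lemma s_inv (i : I) : (R.s i)⁻¹ = R.s i := by
  refine inv_eq_of_mul_eq_one_right (R.faithful ?_)
  ext x
  simp [R.s_apply_s_apply]

lemma refl_apply {β : R.V} (h : R.isRoot β) (x : R.V) :
    R.toLin (R.refl β) x = x - R.coroot β x • β := by
  obtain ⟨w, j, hrefl, rfl⟩ : ∃ w j, R.refl β = w * R.s j * w⁻¹ ∧ β = R.toLin w (R.α j) :=
    ⟨_, _, dif_pos h, (R.root_gen β h).choose_spec.choose_spec⟩
  rw [hrefl, map_mul, map_mul, Module.End.mul_apply, Module.End.mul_apply, s_apply, map_sub,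
    map_smul, toLin_apply_inv_apply, ← R.coroot_toLin w, toLin_apply_inv_apply]

lemma refl_toLin (w : R.W) {β : R.V} (h : R.isRoot β) :
    R.refl (R.toLin w β) = w * R.refl β * w⁻¹ := by
  refine R.faithful (LinearMap.ext fun x => ?_)
  rw [R.refl_apply (R.root_inv w β h), map_mul, map_mul, Module.End.mul_apply,
    Module.End.mul_apply, R.refl_apply h, map_sub, map_smul, toLin_apply_inv_apply,
    ← R.coroot_toLin w β, toLin_apply_inv_apply]

lemma refl_simple (i : I) : R.refl (R.α i) = R.s i :=
  R.faithful (LinearMap.ext fun x => by rw [R.refl_apply (R.root_simple i), s_apply])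

lemma exists_word (w : R.W) : ∃ l : List I, (l.map R.s).prod = w := by
  have hw : w ∈ Subgroup.closure (Set.range R.s) := R.gen ▸ Subgroup.mem_top w
  induction hw using Subgroup.closure_induction_left with
  | one => exact ⟨[], rfl⟩
  | mul_left _ hx _ _ ih =>
    obtain ⟨i, rfl⟩ := hx
    obtain ⟨l, rfl⟩ := ih
    exact ⟨i :: l, rfl⟩
  | inv_mul_cancel _ hx _ _ ih =>
    obtain ⟨i, rfl⟩ := hx
    obtain ⟨l, rfl⟩ := ih
    exact ⟨i :: l, by rw [R.s_inv]; rfl⟩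

lemma len_le_length {w : R.W} {l : List I} (h : (l.map R.s).prod = w) : R.len w ≤ l.length :=
  Nat.sInf_le ⟨l, rfl, h⟩

lemma exists_word_length_eq_len (w : R.W) :
    ∃ l : List I, (l.map R.s).prod = w ∧ l.length = R.len w := by
  obtain ⟨l, hl⟩ := R.exists_word w
  obtain ⟨m, hm, hmw⟩ :=
    Nat.sInf_mem (s := {n | ∃ l : List I, l.length = n ∧ (l.map R.s).prod = w})
      ⟨l.length, l, rfl, hl⟩
  exact ⟨m, hmw, hm⟩

lemma len_mul_le (u v : R.W) : R.len (u * v) ≤ R.len u + R.len v := by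
  obtain ⟨l, rfl, hl⟩ := R.exists_word_length_eq_len u
  obtain ⟨m, rfl, hm⟩ := R.exists_word_length_eq_len v
  rw [← hl, ← hm, ← List.length_append, ← List.prod_append, ← List.map_append]
  exact R.len_le_length rfl

lemma len_s_le_one (i : I) : R.len (R.s i) ≤ 1 :=
  R.len_le_length (l := [i]) (List.prod_singleton)

lemma len_s_mul_mul_s_le (i : I) (u : R.W) : R.len (R.s i * u * R.s i) ≤ R.len u + 2 := by
  have := R.len_mul_le (R.s i * u) (R.s i)
  have := R.len_mul_le (R.s i) u
  have := R.len_s_le_one i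
  omega

/-- Any linear functional equal to `1` on every simple root serves as the height. -/
noncomputable def height : Module.Dual ℚ R.V :=
  (Module.exists_dual_forall_apply_eq_one (linearIndepOn_univ_iff.mpr R.indep)).choose

lemma height_simple (i : I) : R.height (R.α i) = 1 :=
  (Module.exists_dual_forall_apply_eq_one (linearIndepOn_univ_iff.mpr R.indep)).choose_spec i
    (Set.mem_univ i)

variable {R} in
lemma IsPos.height_nonneg {β : R.V} (hβ : R.IsPos β) : 0 ≤ R.height β := by
  obtain ⟨-, c, rfl⟩ := hβ
  simp only [map_sum, map_smul, height_simple, smul_eq_mul, mul_one]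
  positivity

lemma isPos_simple (i : I) : R.IsPos (R.α i) :=
  ⟨R.root_simple i, Pi.single i 1, by simp [Pi.single_apply, ite_smul]⟩

lemma not_isPos_neg_simple (i : I) : ¬ R.IsPos (-R.α i) := fun h => by
  have := h.height_nonneg
  rw [map_neg, height_simple] at this
  norm_num at this

lemma mem_posFinset {β : R.V} : β ∈ R.posFinset ↔ R.IsPos β := Set.Finite.mem_toFinset _

lemma exists_int_coroot_simple (j : I) {δ : R.V} (hδ : R.isRoot δ) :
    ∃ m : ℤ, R.coroot (R.α j) δ = m := by
  obtain ⟨m, hm⟩ := R.root_int δ hδ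
  obtain ⟨m', hm'⟩ := R.root_int _ (R.root_inv (R.s j) δ hδ)
  refine ⟨m j - m' j, ?_⟩
  have key : ∑ k, (m k : ℚ) • R.α k
      = ∑ k, ((m' k : ℚ) + (Pi.single j (R.coroot (R.α j) δ) : I → ℚ) k) • R.α k := by
    simp only [add_smul, Finset.sum_add_distrib, sum_single_smul, ← hm, ← hm', s_apply]
    abel
  have := R.coeff_eq_of_sum_eq key j
  simp only [Pi.single_eq_same] at this
  push_cast
  linarith

lemma exists_int_coroot {β δ : R.V} (hβ : R.isRoot β) (hδ : R.isRoot δ) :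
    ∃ m : ℤ, R.coroot β δ = m := by
  obtain ⟨w, j, rfl⟩ := R.root_gen β hβ
  rw [← R.toLin_apply_inv_apply w δ, coroot_toLin]
  exact R.exists_int_coroot_simple j (R.root_inv _ _ hδ)

lemma one_le_coroot {β δ : R.V} (hβ : R.isRoot β) (hδ : R.isRoot δ) (h : 0 < R.coroot β δ) :
    1 ≤ R.coroot β δ := by
  obtain ⟨m, hm⟩ := R.exists_int_coroot hβ hδ
  rw [hm] at h ⊢
  exact_mod_cast Int.cast_pos.mp h

lemma eq_one_of_isRoot_nat_smul_simple {c : ℕ} (i : I) (h : R.isRoot ((c : ℚ) • R.α i)) :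
    c = 1 := by
  obtain ⟨w, j, hw⟩ := R.root_gen _ h
  -- `α_j = c • w⁻¹ α_i`, and `w⁻¹ α_i` has integer coordinates
  obtain ⟨m, hm⟩ := R.root_int _ (R.root_inv w⁻¹ _ (R.root_simple i))
  have key : ∑ k, (Pi.single j 1 : I → ℚ) k • R.α k = ∑ k, ((c : ℚ) * m k) • R.α k := by
    rw [sum_single_smul, one_smul, ← R.toLin_inv_apply_apply w (R.α j), ← hw, map_smul, hm,
      Finset.smul_sum]
    simp only [smul_smul]
  have hcm := R.coeff_eq_of_sum_eq key j
  rw [Pi.single_eq_same] at hcm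
  have : (c : ℤ) * m j = 1 := by exact_mod_cast hcm.symm
  exact_mod_cast Int.eq_one_of_mul_eq_one_right (Int.natCast_nonneg c) this

variable {R} in
lemma IsPos.eq_simple_of_not_isPos_s_apply {β : R.V} {i : I} (hβ : R.IsPos β)
    (h : ¬ R.IsPos (R.toLin (R.s i) β)) : β = R.α i := by
  have hr : R.isRoot (R.toLin (R.s i) β) := R.root_inv _ _ hβ.1
  obtain ⟨d, hd⟩ := (R.pos_or_neg _ hr).resolve_left fun hp => h ⟨hr, hp⟩
  obtain ⟨hβr, c, hc⟩ := hβ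
  have key : ∑ k, ((c k : ℚ) + d k) • R.α k
      = ∑ k, (Pi.single i (R.coroot (R.α i) β) : I → ℚ) k • R.α k := by
    rw [sum_single_smul]
    simp only [add_smul, Finset.sum_add_distrib, ← hc, ← hd, s_apply]
    abel
  have hck : ∀ k ≠ i, c k = 0 := fun k hk => by
    have := R.coeff_eq_of_sum_eq key k
    rw [Pi.single_eq_of_ne hk] at this
    exact_mod_cast (add_eq_zero_iff_of_nonneg (Nat.cast_nonneg _) (Nat.cast_nonneg _)).mp this |>.1
  have hβi : β = (c i : ℚ) • R.α i := by
    rw [hc, Finset.sum_eq_single i (fun k _ hk => by rw [hck k hk, Nat.cast_zero, zero_smul])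
      (by simp)]
  rw [hβi, R.eq_one_of_isRoot_nat_smul_simple (c := c i) i (hβi ▸ hβr), Nat.cast_one, one_smul]

variable {R} in
lemma IsPos.isPos_s_apply {β : R.V} {i : I} (hβ : R.IsPos β) (hne : β ≠ R.α i) :
    R.IsPos (R.toLin (R.s i) β) :=
  by_contra fun h => hne (hβ.eq_simple_of_not_isPos_s_apply h)

lemma s_apply_sum_posFinset (i : I) :
    R.toLin (R.s i) (∑ β ∈ R.posFinset, β) = ∑ β ∈ R.posFinset, β - (2 : ℚ) • R.α i := by
  classical
  have hi : R.α i ∈ R.posFinset := R.mem_posFinset.mpr (R.isPos_simple i)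
  have hmaps : ∀ a ∈ R.posFinset.erase (R.α i),
      R.toLin (R.s i) a ∈ R.posFinset.erase (R.α i) := by
    intro a ha
    rw [Finset.mem_erase, R.mem_posFinset] at ha ⊢
    refine ⟨fun h => R.not_isPos_neg_simple i ?_, ha.2.isPos_s_apply ha.1⟩
    rw [← R.s_apply_simple, ← h, s_apply_s_apply]
    exact ha.2
  have hperm : ∑ β ∈ R.posFinset.erase (R.α i), R.toLin (R.s i) β
      = ∑ β ∈ R.posFinset.erase (R.α i), β :=
    Finset.sum_nbij' _ _ hmaps hmaps (fun a _ => R.s_apply_s_apply i a)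
      (fun a _ => R.s_apply_s_apply i a) (fun _ _ => rfl)
  rw [map_sum, ← Finset.add_sum_erase _ _ hi, ← Finset.add_sum_erase _ (fun β => β) hi,
    s_apply_simple, hperm]
  module

lemma coroot_simple_rho (i : I) : R.coroot (R.α i) R.ρ = 1 := by
  set S := ∑ β ∈ R.posFinset, β
  have hS : R.coroot (R.α i) S • R.α i = (2 : ℚ) • R.α i :=
    sub_right_injective ((R.s_apply i S).symm.trans (R.s_apply_sum_posFinset i))
  rw [ρ, coroot_smul, smul_left_injective ℚ (R.ne_zero_of_isRoot (R.root_simple i)) hS]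
  norm_num

variable {R} in
lemma IsPos.exists_coroot_simple_pos {β : R.V} (hβ : R.IsPos β) :
    ∃ i, 0 < R.coroot (R.α i) β := by
  obtain ⟨hr, c, hc⟩ := hβ
  have hB : R.B β β = ∑ k, (c k : ℚ) * R.B (R.α k) β := by
    nth_rewrite 1 [hc]
    simp only [map_sum, map_smul, LinearMap.sum_apply, LinearMap.smul_apply, smul_eq_mul]
  have hpos : ∑ _k : I, (0 : ℚ) < ∑ k, (c k : ℚ) * R.B (R.α k) β := by
    rw [Finset.sum_const_zero, ← hB]
    exact R.B_pos β hr
  obtain ⟨k, -, hk⟩ := Finset.exists_lt_of_sum_lt hpos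
  exact ⟨k, (R.coroot_pos_iff (R.root_simple k) β).mpr
    (pos_of_mul_pos_right hk (Nat.cast_nonneg _))⟩

lemma len_refl_le_of_s_apply {β : R.V} {i : I} (hβ : R.isRoot β) (hi : 0 < R.coroot (R.α i) β)
    (h : (R.len (R.refl (R.toLin (R.s i) β)) : ℚ) ≤ 2 * R.coroot (R.toLin (R.s i) β) R.ρ - 1) :
    (R.len (R.refl β) : ℚ) ≤ 2 * R.coroot β R.ρ - 1 := by
  have hlen : R.len (R.refl β) ≤ R.len (R.refl (R.toLin (R.s i) β)) + 2 := by
    have hconj := R.refl_toLin (R.s i) (R.root_inv (R.s i) β hβ)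
    rw [s_apply_s_apply, s_inv] at hconj
    rw [hconj]
    exact R.len_s_mul_mul_s_le i _
  have hρ : R.coroot β R.ρ
      = R.coroot (R.toLin (R.s i) β) R.ρ - R.coroot (R.toLin (R.s i) β) (R.α i) := by
    rw [← coroot_sub, ← one_smul ℚ (R.α i), ← R.coroot_simple_rho i, ← s_apply, coroot_toLin]
  have hβi : 1 ≤ R.coroot β (R.α i) := by
    refine R.one_le_coroot hβ (R.root_simple i) ((R.coroot_pos_iff hβ _).mpr ?_)
    rw [R.B_symm]
    exact (R.coroot_pos_iff (R.root_simple i) β).mp hi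
  have hβ'i : R.coroot (R.toLin (R.s i) β) (R.α i) = -R.coroot β (R.α i) := by
    rw [← coroot_neg, ← s_apply_simple, ← R.coroot_toLin (R.s i) β, s_apply_s_apply]
  have : ((R.len (R.refl β) : ℕ) : ℚ) ≤ R.len (R.refl (R.toLin (R.s i) β)) + 2 := by
    exact_mod_cast hlen
  linarith

theorem len_refl_le {β : R.V} (hβ : R.IsPos β) :
    (R.len (R.refl β) : ℚ) ≤ 2 * R.coroot β R.ρ - 1 := by
  obtain ⟨n, hn⟩ := exists_nat_gt (R.height β)
  induction n generalizing β with
  | zero => exact absurd hn (not_lt.mpr (by simpa using hβ.height_nonneg))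
  | succ n ih =>
    obtain ⟨i, hi⟩ := hβ.exists_coroot_simple_pos
    by_cases hβi : β = R.α i
    · subst hβi
      rw [refl_simple, coroot_simple_rho]
      have := R.len_s_le_one i
      norm_num
      exact_mod_cast this
    · refine R.len_refl_le_of_s_apply hβ.1 hi (ih (hβ.isPos_s_apply hβi) ?_)
      have := R.one_le_coroot (R.root_simple i) hβ.1 hi
      rw [s_apply, map_sub, map_smul, height_simple, smul_eq_mul, mul_one]
      push_cast at hn
      linarith

end RootSystemData

theorem stmt0_general {I : Type} [Fintype I] [DecidableEq I] (R : RootSystemData I)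
    (β : R.V) (hβ : R.IsPos β) :
    (R.len (R.refl β) : ℚ) ≤ 2 * R.coroot β R.ρ - 1 :=
  R.len_refl_le hβ

/-- For any positive root `β`, `ℓ(s_β) ≤ 2⟨ρ, β∨⟩ - 1`. -/
theorem stmt0 {I : Type} [Fintype I] [DecidableEq I] (R : RootSystemData I)
    (hirr : R.IsIrreducible) (β : R.V) (hβ : R.IsPos β) :
    (R.len (R.refl β) : ℚ) ≤ 2 * R.coroot β R.ρ - 1 :=
  stmt0_general R β hβ
end

section
/- Let u, w ∈ W with a directed edge u → w = us_β in the quantum Bruhat graph, and let j ∈ I. If u⁻¹α_j and w⁻¹α_j are both negative roots or both positive roots, then there is a directed edge s_j u → s_j w in the quantum Bruhat graph, which is a Bruhat (resp. quantum) edge if and only if u → w is a Bruhat (resp. quantum) edge. -/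
namespace RootSystemData

variable {I : Type} [Fintype I] [DecidableEq I] (R : RootSystemData I)

lemma B_simple_ne (i : I) : R.B (R.α i) (R.α i) ≠ 0 :=
  ne_of_gt (R.B_pos _ (R.root_simple i))

lemma toLin_apply_mul (a b : R.W) (x : R.V) :
    R.toLin (a * b) x = R.toLin a (R.toLin b x) := by
  rw [map_mul]; rfl

lemma toLin_inv_apply (a : R.W) (x : R.V) : R.toLin a (R.toLin a⁻¹ x) = x := by
  rw [← R.toLin_apply_mul, mul_inv_cancel, map_one]; rfl

lemma s_apply_self (i : I) : R.toLin (R.s i) (R.α i) = -(R.α i) := by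
  rw [R.s_act, mul_div_assoc, div_self (R.B_simple_ne i)]
  module

lemma s_mul_self (i : I) : R.s i * R.s i = 1 := by
  apply R.faithful
  rw [map_mul, map_one]
  ext x
  show R.toLin (R.s i) (R.toLin (R.s i) x) = x
  rw [R.s_act, R.s_act, map_sub, map_smul, smul_eq_mul]
  have hne := R.B_simple_ne i
  match_scalars
  · ring
  · field_simp
    ring

lemma not_isPos_neg {β : R.V} (h1 : R.IsPos β) (h2 : R.IsPos (-β)) : False := by
  obtain ⟨hr, c, hc⟩ := h1
  obtain ⟨-, d, hd⟩ := h2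
  have hsum : ∑ i, ((c i : ℚ) + (d i : ℚ)) • R.α i = 0 := by
    simp only [add_smul, Finset.sum_add_distrib, ← hc, ← hd]
    abel
  have hzero := Fintype.linearIndependent_iff.mp R.indep _ hsum
  have hβ0 : β = 0 := by
    rw [hc]
    apply Finset.sum_eq_zero
    intro i _
    have h1 : (c i : ℚ) = 0 := by
      have := hzero i
      have h2 : (0:ℚ) ≤ (c i : ℚ) := Nat.cast_nonneg _
      have h3 : (0:ℚ) ≤ (d i : ℚ) := Nat.cast_nonneg _
      linarith
    rw [h1, zero_smul]
  have := R.B_pos β hr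
  rw [hβ0] at this
  simp at this

lemma isPos_alpha (j : I) : R.IsPos (R.α j) := by
  refine ⟨R.root_simple j, fun i => if i = j then 1 else 0, ?_⟩
  have : ∀ i, (((if i = j then 1 else 0 : ℕ)) : ℚ) • R.α i
      = if i = j then R.α j else 0 := by
    intro i
    by_cases h : i = j <;> simp [h]
  simp only [this, Finset.sum_ite_eq', Finset.mem_univ, if_true]

lemma isRoot_neg {β : R.V} (h : R.isRoot β) : R.isRoot (-β) := by
  obtain ⟨w, i, rfl⟩ := R.root_gen β h
  have : -(R.toLin w (R.α i)) = R.toLin (w * R.s i) (R.α i) := by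
    rw [R.toLin_apply_mul, R.s_apply_self, map_neg]
  rw [this]
  exact R.root_inv _ _ (R.root_simple i)

lemma isPos_or_isPos_neg {β : R.V} (h : R.isRoot β) : R.IsPos β ∨ R.IsPos (-β) := by
  rcases R.pos_or_neg β h with ⟨c, hc⟩ | ⟨c, hc⟩
  · exact Or.inl ⟨h, c, hc⟩
  · exact Or.inr ⟨R.isRoot_neg h, c, hc⟩

lemma conj_eq_s {v : R.W} {i k : I} {c : ℚ} (hc : c ≠ 0)
    (h : R.toLin v (R.α i) = c • R.α k) : v * R.s i * v⁻¹ = R.s k := by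
  apply R.faithful
  ext x
  show R.toLin (v * R.s i * v⁻¹) x = R.toLin (R.s k) x
  rw [R.toLin_apply_mul, R.toLin_apply_mul, R.s_act, map_sub, map_smul,
    R.toLin_inv_apply, h, R.s_act]
  have hB1 : R.B (R.α i) (R.toLin v⁻¹ x) = c * R.B (R.α k) x := by
    rw [← R.B_inv v (R.α i) (R.toLin v⁻¹ x), R.toLin_inv_apply, h]
    simp [LinearMap.map_smul₂, smul_eq_mul]
  have hB2 : R.B (R.α i) (R.α i) = c * c * R.B (R.α k) (R.α k) := by
    rw [← R.B_inv v (R.α i) (R.α i), h]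
    simp only [LinearMap.map_smul₂, map_smul, LinearMap.smul_apply, smul_eq_mul]
    ring
  have hk := R.B_simple_ne k
  rw [hB1, hB2]
  match_scalars
  · ring
  · field_simp

lemma eq_smul_simple_of_s_neg {k : I} {β : R.V} (hβ : R.IsPos β)
    (hneg : ¬ R.IsPos (R.toLin (R.s k) β)) : ∃ c : ℚ, c ≠ 0 ∧ β = c • R.α k := by
  obtain ⟨hr, b, hb⟩ := hβ
  have hroot : R.isRoot (R.toLin (R.s k) β) := R.root_inv _ _ hr
  have hnegpos : R.IsPos (-(R.toLin (R.s k) β)) :=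
    (R.isPos_or_isPos_neg hroot).resolve_left hneg
  obtain ⟨-, d, hd⟩ := hnegpos
  set μ := 2 * R.B (R.α k) β / R.B (R.α k) (R.α k) with hμ
  have hs : R.toLin (R.s k) β = β - μ • R.α k := R.s_act k β
  have key : ∑ i, (((b i : ℚ) + (d i : ℚ)) - (if i = k then μ else 0)) • R.α i = 0 := by
    have h1 : ∑ i, ((b i : ℚ) + (d i : ℚ)) • R.α i = μ • R.α k := by
      simp only [add_smul, Finset.sum_add_distrib, ← hb, ← hd, hs]
      abel
    have h2 : ∑ i, (if i = k then μ else 0 : ℚ) • R.α i = μ • R.α k := by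
      simp only [ite_smul, zero_smul, Finset.sum_ite_eq', Finset.mem_univ, if_true]
    simp only [sub_smul, Finset.sum_sub_distrib, h1, h2, sub_self]
  have hcoef := Fintype.linearIndependent_iff.mp R.indep _ key
  have hβk : β = ((b k : ℚ)) • R.α k := by
    rw [hb, Finset.sum_eq_single k]
    · intro i _ hik
      have := hcoef i
      rw [if_neg hik] at this
      have h2 : (0:ℚ) ≤ (b i : ℚ) := Nat.cast_nonneg _
      have h3 : (0:ℚ) ≤ (d i : ℚ) := Nat.cast_nonneg _
      have : (b i : ℚ) = 0 := by linarith
      rw [this, zero_smul]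
    · intro hk
      exact absurd (Finset.mem_univ k) hk
  refine ⟨(b k : ℚ), ?_, hβk⟩
  intro h0
  have hβ0 : β = 0 := by rw [hβk, h0, zero_smul]
  have := R.B_pos β hr
  rw [hβ0] at this
  simp at this

lemma word_inv (l : List I) : ((l.map R.s).prod)⁻¹ = (l.reverse.map R.s).prod := by
  induction l with
  | nil => simp
  | cons k l ih =>
    simp only [List.map_cons, List.prod_cons, List.reverse_cons, List.map_append,
      List.prod_append, mul_inv_rev, ih, List.map_nil, List.prod_nil, mul_one,
      List.map_cons, List.prod_cons]
    rw [R.s_inv]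

lemma len_spec (w : R.W) : ∃ l : List I, l.length = R.len w ∧ (l.map R.s).prod = w := by
  have hne : {n | ∃ l : List I, l.length = n ∧ (l.map R.s).prod = w}.Nonempty := by
    obtain ⟨l, hl⟩ := R.exists_word w
    exact ⟨l.length, l, rfl, hl⟩
  exact Nat.sInf_mem hne

lemma len_le {w : R.W} (l : List I) (h : (l.map R.s).prod = w) : R.len w ≤ l.length :=
  Nat.sInf_le ⟨l, rfl, h⟩

lemma len_inv (w : R.W) : R.len w⁻¹ = R.len w := by
  have key : ∀ v : R.W, R.len v⁻¹ ≤ R.len v := by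
    intro v
    obtain ⟨l, hl, hp⟩ := R.len_spec v
    calc R.len v⁻¹ ≤ (l.reverse).length :=
          R.len_le l.reverse (by rw [← R.word_inv, hp])
    _ = R.len v := by rw [List.length_reverse, hl]
  exact le_antisymm (key w) (by simpa using key w⁻¹)

lemma len_mul_s_le (w : R.W) (i : I) : R.len (w * R.s i) ≤ R.len w + 1 := by
  obtain ⟨l, hl, hp⟩ := R.len_spec w
  have h : ((l ++ [i]).map R.s).prod = w * R.s i := by simp [hp]
  have := R.len_le _ h
  simpa [hl] using this

lemma len_s_mul_le (i : I) (w : R.W) : R.len (R.s i * w) ≤ R.len w + 1 := by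
  obtain ⟨l, hl, hp⟩ := R.len_spec w
  have h : ((i :: l).map R.s).prod = R.s i * w := by simp [hp]
  have := R.len_le _ h
  simpa [hl] using this

lemma key_aux : ∀ (l : List I) (i : I),
    R.IsPos (-(R.toLin (l.map R.s).prod (R.α i))) →
    R.len ((l.map R.s).prod * R.s i) + 1 ≤ l.length := by
  intro l
  induction l with
  | nil =>
    intro i hneg
    exfalso
    refine R.not_isPos_neg (R.isPos_alpha i) ?_
    simpa using hneg
  | cons k l ih =>
    intro i hneg
    set v := (l.map R.s).prod with hv
    have hprod : ((k :: l).map R.s).prod = R.s k * v := by simp [hv]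
    rw [hprod] at hneg ⊢
    rw [R.toLin_apply_mul] at hneg
    have hγroot : R.isRoot (R.toLin v (R.α i)) := R.root_inv _ _ (R.root_simple i)
    rcases R.isPos_or_isPos_neg hγroot with hpos | hneg'
    · have hsk : ¬ R.IsPos (R.toLin (R.s k) (R.toLin v (R.α i))) := fun hp =>
        R.not_isPos_neg hp hneg
      obtain ⟨c, hc0, hc⟩ := R.eq_smul_simple_of_s_neg hpos hsk
      have hconj := R.conj_eq_s hc0 hc
      have heq : (R.s k * v) * R.s i = v := by
        rw [← hconj]
        calc (v * R.s i * v⁻¹) * v * R.s i = v * (R.s i * R.s i) := by group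
        _ = v := by rw [R.s_mul_self, mul_one]
      rw [heq]
      have := R.len_le l hv.symm
      simp only [List.length_cons]
      omega
    · have hIH := ih i hneg'
      have hle : R.len ((R.s k * v) * R.s i) ≤ R.len (v * R.s i) + 1 := by
        rw [mul_assoc]
        exact R.len_s_mul_le k (v * R.s i)
      simp only [List.length_cons]
      omega

lemma len_mul_s_of_neg {w : R.W} {i : I} (h : R.IsPos (-(R.toLin w (R.α i)))) :
    R.len (w * R.s i) + 1 = R.len w := by
  obtain ⟨l, hl, hp⟩ := R.len_spec w
  have h1 : R.len (w * R.s i) + 1 ≤ R.len w := by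
    have := R.key_aux l i (by rwa [hp])
    rwa [hp, hl] at this
  have h2 : R.len w ≤ R.len (w * R.s i) + 1 := by
    have heq : (w * R.s i) * R.s i = w := by rw [mul_assoc, R.s_mul_self, mul_one]
    calc R.len w = R.len ((w * R.s i) * R.s i) := by rw [heq]
    _ ≤ _ := R.len_mul_s_le _ i
  omega

lemma len_mul_s_of_pos {w : R.W} {i : I} (h : R.IsPos (R.toLin w (R.α i))) :
    R.len (w * R.s i) = R.len w + 1 := by
  have h' : R.IsPos (-(R.toLin (w * R.s i) (R.α i))) := by
    rw [R.toLin_apply_mul, R.s_apply_self, map_neg, neg_neg]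
    exact h
  have := R.len_mul_s_of_neg h'
  rw [mul_assoc, R.s_mul_self, mul_one] at this
  omega

lemma len_s_mul_of_pos {x : R.W} {j : I} (h : R.IsPos (R.toLin x⁻¹ (R.α j))) :
    R.len (R.s j * x) = R.len x + 1 := by
  have hkey := R.len_mul_s_of_pos (w := x⁻¹) (i := j) h
  rw [← R.len_inv (R.s j * x), mul_inv_rev, R.s_inv, hkey, R.len_inv]

lemma len_s_mul_of_neg {x : R.W} {j : I} (h : R.IsPos (-(R.toLin x⁻¹ (R.α j)))) :
    R.len (R.s j * x) + 1 = R.len x := by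
  have hkey := R.len_mul_s_of_neg (w := x⁻¹) (i := j) h
  rw [← R.len_inv (R.s j * x), mul_inv_rev, R.s_inv, hkey, R.len_inv]

end RootSystemData

/-- Diamond lemma for the quantum Bruhat graph, part (2). -/
theorem stmt7 {I : Type} [Fintype I] [DecidableEq I] (R : RootSystemData I)
    (u w : R.W) (β : R.V) (hβ : R.IsPos β)
    (hw : w = u * R.refl β) (hedge : R.QBGEdge u β) (j : I)
    (h : (R.IsPos (-(R.toLin u⁻¹ (R.α j))) ∧ R.IsPos (-(R.toLin w⁻¹ (R.α j)))) ∨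
         (R.IsPos (R.toLin u⁻¹ (R.α j)) ∧ R.IsPos (R.toLin w⁻¹ (R.α j)))) :
    R.QBGEdge (R.s j * u) β ∧
    (R.BruhatEdge (R.s j * u) β ↔ R.BruhatEdge u β) ∧
    (R.QuantumEdge (R.s j * u) β ↔ R.QuantumEdge u β) := by
  subst hw
  have hassoc : R.s j * (u * R.refl β) = R.s j * u * R.refl β := by rw [mul_assoc]
  have key : (R.len (R.s j * u * R.refl β) + 1 = R.len (u * R.refl β) ∧
              R.len (R.s j * u) + 1 = R.len u) ∨
             (R.len (R.s j * u * R.refl β) = R.len (u * R.refl β) + 1 ∧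
              R.len (R.s j * u) = R.len u + 1) := by
    rcases h with ⟨h1, h2⟩ | ⟨h1, h2⟩
    · left
      exact ⟨by rw [← hassoc]; exact R.len_s_mul_of_neg h2, R.len_s_mul_of_neg h1⟩
    · right
      exact ⟨by rw [← hassoc]; exact R.len_s_mul_of_pos h2, R.len_s_mul_of_pos h1⟩
  have hbr : R.BruhatEdge (R.s j * u) β ↔ R.BruhatEdge u β := by
    simp only [RootSystemData.BruhatEdge]
    refine and_congr_right fun _ => ?_
    rcases key with ⟨e1, e2⟩ | ⟨e1, e2⟩ <;> omega
  have hq : R.QuantumEdge (R.s j * u) β ↔ R.QuantumEdge u β := by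
    simp only [RootSystemData.QuantumEdge]
    refine and_congr_right fun _ => ?_
    rcases key with ⟨e1, e2⟩ | ⟨e1, e2⟩ <;>
    · have e1q : ((R.len (R.s j * u * R.refl β) : ℚ) - (R.len (u * R.refl β) : ℚ)) =
          ((R.len (R.s j * u) : ℚ) - (R.len u : ℚ)) := by
        have c1 := congrArg (Nat.cast : ℕ → ℚ) e1
        have c2 := congrArg (Nat.cast : ℕ → ℚ) e2
        push_cast at c1 c2
        linarith
      constructor <;> intro hx <;> linarith
  exact ⟨(or_congr hbr hq).mpr hedge, hbr, hq⟩
end
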